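/- Validity of Paxos: any decided value is the proposed value of some proposer. Formally, in the Paxos transition system, the accepted_value of any acceptor is always either ⊥ or a value that was input by some proposer, and hence any decided value was proposed by some process. -/

import Mathlib

/-- State of a Paxos acceptor. -/
structure AccState (V : Type) where
  minP : ℕ
  accP : ℕ
  accV : Option V

/-- Events at acceptors: a (promised) Prepare, or a successful Accept. -/
inductive Ev (A V : Type) : Type
  | prepare (a : A) (n : ℕ)
  | accept (a : A) (n : ℕ) (v : V)

/-- Effect of an event on the state of acceptor `a`. -/
def stepAcc {A V : Type} [DecidableEq A] (a : A) (s : AccState V) : Ev A V → AccState V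
  | .prepare a' n => if a' = a then { s with minP := max s.minP n } else s
  | .accept a' n v => if a' = a ∧ s.minP ≤ n then ⟨n, n, some v⟩ else s

/-- State of acceptor `a` after processing the history `h` (initially `(0,0,⊥)`). -/
def accStateAfter {A V : Type} [DecidableEq A] (h : List (Ev A V)) (a : A) : AccState V :=
  h.foldl (stepAcc a) ⟨0, 0, none⟩

/-- A quorum is a majority of the acceptors. -/
def Quorum {A : Type} [Fintype A] (Q : Finset A) : Prop :=
  Fintype.card A < 2 * Q.card

/-- Well-formed Paxos histories: every accept event `accept a n v` at position `i`
satisfies: (1) it succeeds, i.e. `n ≥` the acceptor's `min_proposal` at that point;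
(2) all accepts with proposal number `n` carry the same value (proposal numbers are
owned by a single proposer); (3) the proposer of `n` first got acknowledged Prepare
responses from a quorum `Q` (each acceptor `b ∈ Q` had `min_proposal < n` at the time
`t b` of its prepare), and `v` is either the proposer's own input (in `Proposed`) if
no acceptor of `Q` had accepted a value, or the accepted value with the highest
accepted proposal among the responses. -/
def WF {A V : Type} [Fintype A] [DecidableEq A] (Proposed : Set V)
    (h : List (Ev A V)) : Prop :=
  ∀ i a n v, h[(i : ℕ)]? = some (.accept a n v) →
    (accStateAfter (h.take i) a).minP ≤ n ∧
    (∀ j a' v', h[(j : ℕ)]? = some (.accept a' n v') → v' = v) ∧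
    (∃ Q : Finset A, Quorum Q ∧ ∃ t : A → ℕ,
      (∀ b ∈ Q, t b < i ∧ h[t b]? = some (.prepare b n) ∧
        (accStateAfter (h.take (t b)) b).minP < n) ∧
      (((∀ b ∈ Q, (accStateAfter (h.take (t b)) b).accV = none) ∧ v ∈ Proposed) ∨
       (∃ b0 ∈ Q, (accStateAfter (h.take (t b0)) b0).accV = some v ∧
         ∀ b ∈ Q,
           (accStateAfter (h.take (t b)) b).accP
             ≤ (accStateAfter (h.take (t b0)) b0).accP)))

/-- `v` is chosen (decided) with proposal number `n`: a quorum of acceptors has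
accepted `(n, v)`. -/
def Chosen {A V : Type} [Fintype A] [DecidableEq A] (h : List (Ev A V)) (n : ℕ)
    (v : V) : Prop :=
  ∃ Q : Finset A, Quorum Q ∧ ∀ a ∈ Q, ∃ i, h[(i : ℕ)]? = some (Ev.accept a n v)

/-! Acceptors only ever store a value by processing an `accept` event, and by well-formedness
the value of an `accept` event is either a proposer's input or a value already accepted by some
acceptor at an earlier position of the history. Strong induction on that position shows that
every accepted value is an input; a chosen value was accepted by a nonempty quorum. -/

lemma List.exists_lt_getElem?_eq_of_mem_take {α : Type*} {l : List α} {k : ℕ} {x : α}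
    (hx : x ∈ l.take k) : ∃ j < k, l[j]? = some x := by
  obtain ⟨j, hj, rfl⟩ := List.mem_take_iff_getElem.1 hx
  exact ⟨j, lt_of_lt_of_le hj (min_le_left _ _), List.getElem?_eq_getElem _⟩

lemma Quorum.nonempty {A : Type} [Fintype A] {Q : Finset A} (hQ : Quorum Q) : Q.Nonempty := by
  rw [← Finset.card_pos]
  unfold Quorum at hQ
  omega

section Acceptor

variable {A V : Type} [DecidableEq A]

lemma accStateAfter_append_singleton (l : List (Ev A V)) (e : Ev A V) (a : A) :
    accStateAfter (l ++ [e]) a = stepAcc a (accStateAfter l a) e :=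
  List.foldl_append ..

lemma stepAcc_accV_eq_some {a : A} {s : AccState V} {e : Ev A V} {v : V}
    (hv : (stepAcc a s e).accV = some v) : s.accV = some v ∨ ∃ n, e = .accept a n v := by
  cases e with
  | prepare a' n =>
    left
    simp only [stepAcc] at hv
    split_ifs at hv <;> exact hv
  | accept a' n w =>
    simp only [stepAcc] at hv
    split_ifs at hv with hstep
    · obtain ⟨rfl, -⟩ := hstep
      cases hv
      exact Or.inr ⟨n, rfl⟩
    · exact Or.inl hv

lemma exists_accept_mem_of_accV_eq_some {l : List (Ev A V)} {a : A} {v : V}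
    (hv : (accStateAfter l a).accV = some v) : ∃ n, Ev.accept a n v ∈ l := by
  induction l using List.reverseRecOn with
  | nil => simp [accStateAfter] at hv
  | append_singleton l e ih =>
    rw [accStateAfter_append_singleton] at hv
    rcases stepAcc_accV_eq_some hv with hprev | ⟨n, rfl⟩
    · obtain ⟨n, hn⟩ := ih hprev
      exact ⟨n, List.mem_append_left _ hn⟩
    · exact ⟨n, by simp⟩

lemma exists_accept_lt_of_accV_take_eq_some {h : List (Ev A V)} {i : ℕ} {a : A} {v : V}
    (hv : (accStateAfter (h.take i) a).accV = some v) :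
    ∃ j < i, ∃ n, h[j]? = some (.accept a n v) := by
  obtain ⟨n, hn⟩ := exists_accept_mem_of_accV_eq_some hv
  obtain ⟨j, hj, hget⟩ := List.exists_lt_getElem?_eq_of_mem_take hn
  exact ⟨j, hj, n, hget⟩

end Acceptor

namespace WF

variable {A V : Type} [Fintype A] [DecidableEq A] {Proposed : Set V} {h : List (Ev A V)}

lemma accept_mem (hwf : WF Proposed h) {i : ℕ} {a : A} {n : ℕ} {v : V}
    (hi : h[i]? = some (.accept a n v)) : v ∈ Proposed := by
  induction i using Nat.strong_induction_on generalizing a n v with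
  | _ i ih =>
    obtain ⟨-, -, Q, -, t, hprep, hval⟩ := hwf i a n v hi
    rcases hval with ⟨-, hinput⟩ | ⟨b, hb, hacc, -⟩
    · exact hinput
    · obtain ⟨j, hj, n', hget⟩ := exists_accept_lt_of_accV_take_eq_some hacc
      exact ih j (hj.trans (hprep b hb).1) hget

lemma accV_mem (hwf : WF Proposed h) {i : ℕ} {a : A} {v : V}
    (hv : (accStateAfter (h.take i) a).accV = some v) : v ∈ Proposed := by
  obtain ⟨j, -, n, hget⟩ := exists_accept_lt_of_accV_take_eq_some hv
  exact hwf.accept_mem hget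

lemma chosen_mem (hwf : WF Proposed h) {n : ℕ} {v : V} (hc : Chosen h n v) : v ∈ Proposed := by
  obtain ⟨Q, hQ, hacc⟩ := hc
  obtain ⟨a, ha⟩ := hQ.nonempty
  obtain ⟨i, hi⟩ := hacc a ha
  exact hwf.accept_mem hi

end WF

/-- Validity of Paxos: at every point of a well-formed execution, the
`accepted_value` of any acceptor is either `⊥` or a value input by some proposer
(i.e. in `Proposed`); hence any decided (chosen) value was proposed by some
process. -/
theorem paxos_validity {A V : Type} [Fintype A] [DecidableEq A] :
    ∀ (Proposed : Set V) (h : List (Ev A V)),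
      WF Proposed h →
      (∀ (i : ℕ) (a : A) (v : V),
        (accStateAfter (h.take i) a).accV = some v → v ∈ Proposed) ∧
      (∀ (n : ℕ) (v : V), Chosen h n v → v ∈ Proposed) :=
  fun _ _ hwf => ⟨fun _ _ _ => hwf.accV_mem, fun _ _ => hwf.chosen_mem⟩
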